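/- Distributivity over the left factor holds: (r + s) × t = (r × t) + (s × t), for all nonempty finite sets of nontrivial trees r, s, t, while right distributivity fails in general. -/

import Mathlib

/-- Planar binary rooted trees: either the trivial tree `leaf` (drawn `|`)
or the grafting `node l r = l ∨ r` of two trees. -/
inductive PBT : Type
  | leaf : PBT
  | node : PBT → PBT → PBT
deriving DecidableEq

namespace PBT

/-- Number of internal vertices of a tree. -/
def size : PBT → ℕ
  | leaf => 0
  | node l r => l.size + r.size + 1

/-- The dendriform sum of two trees, a set of trees:
`s + t = (s ⊣ t) ∪ (s ⊢ t)` with `s ⊣ t = sˡ ∨ (sʳ + t)`, `s ⊢ t = (s + tˡ) ∨ tʳ`,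
and the trivial tree acting as neutral element. -/
def addT : PBT → PBT → Set PBT
  | leaf, t => {t}
  | node l r, leaf => {node l r}
  | node l r, node l' r' =>
      (fun x => node l x) '' addT r (node l' r') ∪
      (fun x => node x r') '' addT (node l r) l'
termination_by s t => s.size + t.size
decreasing_by all_goals (simp [size] <;> omega)

/-- The left operation `s ⊣ t := sˡ ∨ (sʳ + t)` on trees (with `s ⊣ | = s`),
valued in sets of trees. -/
def leftT : PBT → PBT → Set PBT
  | leaf, _ => ∅
  | node l r, leaf => {node l r}
  | node l r, node l' r' => (fun x => node l x) '' addT r (node l' r')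

/-- The right operation `s ⊢ t := (s + tˡ) ∨ tʳ` on trees (with `| ⊢ t = t`),
valued in sets of trees. -/
def rightT : PBT → PBT → Set PBT
  | _, leaf => ∅
  | leaf, t => {t}
  | node l r, node l' r' => (fun x => node x r') '' addT (node l r) l'

/-- Elementwise extension of `⊣` to sets of trees. -/
def leftS (S T : Set PBT) : Set PBT := ⋃ s ∈ S, ⋃ t ∈ T, leftT s t

/-- Elementwise extension of `⊢` to sets of trees. -/
def rightS (S T : Set PBT) : Set PBT := ⋃ s ∈ S, ⋃ t ∈ T, rightT s t

/-- Elementwise extension of the sum `+` to sets of trees: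
`S + T = (S ⊣ T) ∪ (S ⊢ T)`. -/
def addS (S T : Set PBT) : Set PBT := ⋃ s ∈ S, ⋃ t ∈ T, addT s t

/-- A nonempty finite set of nontrivial trees. -/
def Good (S : Set PBT) : Prop := S.Nonempty ∧ S.Finite ∧ ∀ t ∈ S, t ≠ leaf

end PBT

namespace PBT

/-- Multiplication of a tree by a set of trees, by substitution: write
`t = tˡ ∨ tʳ` as `tˡ ⊢ 1 ⊣ tʳ` (where `1` is the one-vertex tree) and replace
each occurrence of `1` by `S`, so `t × S = (tˡ × S) ⊢ S ⊣ (tʳ × S)`. -/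
def mulT : PBT → Set PBT → Set PBT
  | leaf, _ => {leaf}
  | node l r, S => rightS (mulT l S) (leftS S (mulT r S))

/-- Elementwise extension of the multiplication to sets of trees. -/
def mulS (T S : Set PBT) : Set PBT := ⋃ t ∈ T, mulT t S

end PBT

namespace PBT
@[simp] lemma addT_leaf_left (t : PBT) : addT leaf t = {t} := by simp [addT]

@[simp] lemma addT_leaf_right (t : PBT) : addT t leaf = {t} := by cases t <;> simp [addT]

lemma leftT_node (l r c : PBT) : leftT (node l r) c = node l '' addT r c := by
  cases c <;> simp [leftT]

lemma rightT_node (s l r : PBT) : rightT s (node l r) = (fun x => node x r) '' addT s l := by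
  cases s <;> simp [rightT]

@[simp] lemma leftT_leaf (t : PBT) : leftT leaf t = ∅ := by simp [leftT]

@[simp] lemma rightT_leaf (t : PBT) : rightT t leaf = ∅ := by cases t <;> simp [rightT]

lemma addT_eq_union_right (s t : PBT) (h : t ≠ leaf) :
    addT s t = leftT s t ∪ rightT s t := by
  cases s <;> cases t <;> simp_all [addT, leftT, rightT]

lemma addT_eq_union_left (s t : PBT) (h : s ≠ leaf) :
    addT s t = leftT s t ∪ rightT s t := by
  cases s <;> cases t <;> simp_all [addT, leftT, rightT]

lemma mem_leftS {x : PBT} {A B : Set PBT} :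
    x ∈ leftS A B ↔ ∃ a ∈ A, ∃ b ∈ B, x ∈ leftT a b := by simp [leftS]

lemma mem_rightS {x : PBT} {A B : Set PBT} :
    x ∈ rightS A B ↔ ∃ a ∈ A, ∃ b ∈ B, x ∈ rightT a b := by simp [rightS]

lemma mem_addS {x : PBT} {A B : Set PBT} :
    x ∈ addS A B ↔ ∃ a ∈ A, ∃ b ∈ B, x ∈ addT a b := by simp [addS]



lemma memA {a b c : PBT} (H : addS (addT a b) {c} = addS {a} (addT b c)) (x : PBT) :
    (∃ u ∈ addT a b, x ∈ addT u c) ↔ (∃ v ∈ addT b c, x ∈ addT a v) := by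
  have := Set.ext_iff.mp H x
  simpa [mem_addS] using this

lemma L1 (a1 a2 b c : PBT) (H : addS (addT a2 b) {c} = addS {a2} (addT b c)) :
    leftS (leftT (node a1 a2) b) {c} = leftS {node a1 a2} (addT b c) := by
  have hH := memA H
  ext x
  simp only [mem_leftS, leftT_node, Set.mem_image, Set.mem_singleton_iff]
  constructor
  · rintro ⟨u, ⟨w, hw, rfl⟩, c', rfl, hx⟩
    rw [leftT_node] at hx
    obtain ⟨z, hz, rfl⟩ := hx
    obtain ⟨v, hv, hz'⟩ := (hH z).mp ⟨w, hw, hz⟩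
    refine ⟨node a1 a2, rfl, v, hv, ?_⟩
    rw [leftT_node]
    exact ⟨z, hz', rfl⟩
  · rintro ⟨u, rfl, v, hv, hx⟩
    rw [leftT_node] at hx
    obtain ⟨z, hz, rfl⟩ := hx
    obtain ⟨w, hw, hz'⟩ := (hH z).mpr ⟨v, hv, hz⟩
    refine ⟨node a1 w, ⟨w, hw, rfl⟩, c, rfl, ?_⟩
    rw [leftT_node]
    exact ⟨z, hz', rfl⟩

lemma L3 (a b c1 c2 : PBT) (H : addS (addT a b) {c1} = addS {a} (addT b c1)) :
    rightS {a} (rightT b (node c1 c2)) = rightS (addT a b) {node c1 c2} := by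
  have hH := memA H
  ext x
  simp only [mem_rightS, rightT_node (s := b), Set.mem_image, Set.mem_singleton_iff]
  constructor
  · rintro ⟨u, rfl, v, ⟨w, hw, rfl⟩, hx⟩
    rw [rightT_node] at hx
    obtain ⟨z, hz, rfl⟩ := hx
    obtain ⟨p, hp, hz'⟩ := (hH z).mpr ⟨w, hw, hz⟩
    refine ⟨p, hp, node c1 c2, rfl, ?_⟩
    rw [rightT_node]
    exact ⟨z, hz', rfl⟩
  · rintro ⟨u, hu, v, rfl, hx⟩
    rw [rightT_node] at hx
    obtain ⟨z, hz, rfl⟩ := hx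
    obtain ⟨w, hw, hz'⟩ := (hH z).mp ⟨u, hu, hz⟩
    refine ⟨a, rfl, node w c2, ⟨w, hw, rfl⟩, ?_⟩
    rw [rightT_node]
    exact ⟨z, hz', rfl⟩

lemma L2 (a b c : PBT) : leftS (rightT a b) {c} = rightS {a} (leftT b c) := by
  cases b with
  | leaf => ext x; simp [mem_leftS, mem_rightS]
  | node b1 b2 =>
    ext x
    simp only [mem_leftS, mem_rightS, rightT_node (s := a), leftT_node,
      Set.mem_image, Set.mem_singleton_iff]
    constructor
    · rintro ⟨u, ⟨w, hw, rfl⟩, c', rfl, hx⟩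
      rw [leftT_node] at hx
      obtain ⟨z, hz, rfl⟩ := hx
      refine ⟨a, rfl, node b1 z, ⟨z, hz, rfl⟩, ?_⟩
      rw [rightT_node]
      exact ⟨w, hw, rfl⟩
    · rintro ⟨u, rfl, v, ⟨z, hz, rfl⟩, hx⟩
      rw [rightT_node] at hx
      obtain ⟨w, hw, rfl⟩ := hx
      refine ⟨node w b2, ⟨w, hw, rfl⟩, c, rfl, ?_⟩
      rw [leftT_node]
      exact ⟨z, hz, rfl⟩



lemma addS_single (a b : PBT) : addS {a} {b} = addT a b := by simp [addS]

lemma addS_leaf_left (X : Set PBT) : addS {leaf} X = X := by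
  ext x; simp [mem_addS]

lemma addS_leaf_right (X : Set PBT) : addS X {leaf} = X := by
  ext x; simp [mem_addS]

lemma leftS_union_left (X Y Z : Set PBT) : leftS (X ∪ Y) Z = leftS X Z ∪ leftS Y Z := by
  ext x; simp [mem_leftS]; aesop

lemma rightS_union_right (X Y Z : Set PBT) : rightS X (Y ∪ Z) = rightS X Y ∪ rightS X Z := by
  ext x; simp [mem_rightS]; aesop

lemma addS_split_right (X : Set PBT) (c : PBT) (hc : c ≠ leaf) :
    addS X {c} = leftS X {c} ∪ rightS X {c} := by
  ext x; simp [mem_addS, mem_leftS, mem_rightS, addT_eq_union_right _ _ hc]; aesop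

lemma addS_split_left (a : PBT) (X : Set PBT) (ha : a ≠ leaf) :
    addS {a} X = leftS {a} X ∪ rightS {a} X := by
  ext x; simp [mem_addS, mem_leftS, mem_rightS, addT_eq_union_left _ _ ha]; aesop

theorem assoc (a b c : PBT) : addS (addT a b) {c} = addS {a} (addT b c) := by
  cases a with
  | leaf => rw [addT_leaf_left, addS_leaf_left, addS_single]
  | node a1 a2 =>
    cases c with
    | leaf => rw [addT_leaf_right, addS_leaf_right, addS_single]
    | node c1 c2 =>
      cases b with
      | leaf => rw [addT_leaf_right, addT_leaf_left, addS_single]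
      | node b1 b2 =>
        have h1 : leftS (addT (node a1 a2) (node b1 b2)) {node c1 c2}
            = leftS {node a1 a2} (addT (node b1 b2) (node c1 c2))
              ∪ rightS {node a1 a2} (leftT (node b1 b2) (node c1 c2)) := by
          rw [addT_eq_union_left _ _ (by simp), leftS_union_left,
            L1 a1 a2 _ _ (assoc a2 (node b1 b2) (node c1 c2)), L2]
        have h2 : rightS (addT (node a1 a2) (node b1 b2)) {node c1 c2}
            = rightS {node a1 a2} (rightT (node b1 b2) (node c1 c2)) :=
          (L3 _ _ _ _ (assoc (node a1 a2) (node b1 b2) c1)).symm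
        rw [addS_split_right _ _ (by simp), h1, h2, Set.union_assoc,
          ← rightS_union_right, ← addT_eq_union_left _ _ (by simp),
          ← addS_split_left _ _ (by simp)]
termination_by a.size + c.size
decreasing_by all_goals (simp [size] <;> omega)



lemma l1 (a b c : PBT) : leftS (leftT a b) {c} = leftS {a} (addT b c) := by
  cases a with
  | leaf => ext x; simp [mem_leftS]
  | node a1 a2 => exact L1 a1 a2 b c (assoc a2 b c)

lemma l3 (a b c : PBT) : rightS {a} (rightT b c) = rightS (addT a b) {c} := by
  cases c with
  | leaf => ext x; simp [mem_rightS]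
  | node c1 c2 => exact L3 a b c1 c2 (assoc a b c1)

lemma meml1 (a b c x : PBT) :
    (∃ u ∈ leftT a b, x ∈ leftT u c) ↔ ∃ v ∈ addT b c, x ∈ leftT a v := by
  have := Set.ext_iff.mp (l1 a b c) x
  simpa [mem_leftS] using this

lemma meml2 (a b c x : PBT) :
    (∃ u ∈ rightT a b, x ∈ leftT u c) ↔ ∃ v ∈ leftT b c, x ∈ rightT a v := by
  have := Set.ext_iff.mp (L2 a b c) x
  simpa [mem_leftS, mem_rightS] using this

lemma meml3 (a b c x : PBT) :
    (∃ v ∈ rightT b c, x ∈ rightT a v) ↔ ∃ u ∈ addT a b, x ∈ rightT u c := by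
  have := Set.ext_iff.mp (l3 a b c) x
  simpa [mem_rightS] using this

lemma leftS_leftS (A B C : Set PBT) : leftS (leftS A B) C = leftS A (addS B C) := by
  ext x
  simp only [mem_leftS, mem_addS]
  constructor
  · rintro ⟨u, ⟨a, ha, b, hb, hu⟩, c, hc, hx⟩
    obtain ⟨v, hv, hx'⟩ := (meml1 a b c x).mp ⟨u, hu, hx⟩
    exact ⟨a, ha, v, ⟨b, hb, c, hc, hv⟩, hx'⟩
  · rintro ⟨a, ha, v, ⟨b, hb, c, hc, hv⟩, hx⟩
    obtain ⟨u, hu, hx'⟩ := (meml1 a b c x).mpr ⟨v, hv, hx⟩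
    exact ⟨u, ⟨a, ha, b, hb, hu⟩, c, hc, hx'⟩

lemma leftS_rightS (A B C : Set PBT) : leftS (rightS A B) C = rightS A (leftS B C) := by
  ext x
  simp only [mem_leftS, mem_rightS]
  constructor
  · rintro ⟨u, ⟨a, ha, b, hb, hu⟩, c, hc, hx⟩
    obtain ⟨v, hv, hx'⟩ := (meml2 a b c x).mp ⟨u, hu, hx⟩
    exact ⟨a, ha, v, ⟨b, hb, c, hc, hv⟩, hx'⟩
  · rintro ⟨a, ha, v, ⟨b, hb, c, hc, hv⟩, hx⟩
    obtain ⟨u, hu, hx'⟩ := (meml2 a b c x).mpr ⟨v, hv, hx⟩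
    exact ⟨u, ⟨a, ha, b, hb, hu⟩, c, hc, hx'⟩

lemma rightS_rightS (A B C : Set PBT) : rightS A (rightS B C) = rightS (addS A B) C := by
  ext x
  simp only [mem_rightS, mem_addS]
  constructor
  · rintro ⟨a, ha, v, ⟨b, hb, c, hc, hv⟩, hx⟩
    obtain ⟨u, hu, hx'⟩ := (meml3 a b c x).mp ⟨v, hv, hx⟩
    exact ⟨u, ⟨a, ha, b, hb, hu⟩, c, hc, hx'⟩
  · rintro ⟨u, ⟨a, ha, b, hb, hu⟩, c, hc, hx⟩
    obtain ⟨v, hv, hx'⟩ := (meml3 a b c x).mpr ⟨u, hu, hx⟩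
    exact ⟨a, ha, v, ⟨b, hb, c, hc, hv⟩, hx'⟩

lemma mem_mulS {x : PBT} {T S : Set PBT} : x ∈ mulS T S ↔ ∃ t ∈ T, x ∈ mulT t S := by
  simp [mulS]

@[simp] lemma mulT_leaf (S : Set PBT) : mulT leaf S = {leaf} := rfl

lemma mulT_node (l r : PBT) (S : Set PBT) :
    mulT (node l r) S = rightS (mulT l S) (leftS S (mulT r S)) := rfl

@[simp] lemma mulS_single (t : PBT) (S : Set PBT) : mulS {t} S = mulT t S := by
  simp [mulS]

lemma mulS_union (X Y S : Set PBT) : mulS (X ∪ Y) S = mulS X S ∪ mulS Y S := by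
  ext x; simp [mem_mulS]; aesop

lemma leaf_not_mem_rightS (A B : Set PBT) : leaf ∉ rightS A B := by
  rw [mem_rightS]
  rintro ⟨a, ha, b, hb, h⟩
  cases b with
  | leaf => simp at h
  | node b1 b2 =>
    rw [rightT_node] at h
    obtain ⟨z, _, hz⟩ := h
    simp at hz

lemma leaf_not_mem_mulT_node (l r : PBT) (S : Set PBT) : leaf ∉ mulT (node l r) S :=
  leaf_not_mem_rightS _ _

lemma addS_split_noleaf (X Y : Set PBT) (h : leaf ∉ X) :
    addS X Y = leftS X Y ∪ rightS X Y := by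
  ext x
  simp only [mem_addS, mem_leftS, mem_rightS, Set.mem_union]
  constructor
  · rintro ⟨a, ha, b, hb, hx⟩
    rw [addT_eq_union_left _ _ (fun e => h (e ▸ ha))] at hx
    rcases hx with hx | hx
    · exact Or.inl ⟨a, ha, b, hb, hx⟩
    · exact Or.inr ⟨a, ha, b, hb, hx⟩
  · rintro (⟨a, ha, b, hb, hx⟩ | ⟨a, ha, b, hb, hx⟩) <;>
      refine ⟨a, ha, b, hb, ?_⟩ <;>
      rw [addT_eq_union_left _ _ (fun e => h (e ▸ ha))]
    · exact Or.inl hx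
    · exact Or.inr hx

lemma mulS_imageL (l : PBT) (X S : Set PBT) :
    mulS ((fun c => node l c) '' X) S = rightS (mulT l S) (leftS S (mulS X S)) := by
  ext x
  simp only [mem_mulS, Set.mem_image, mem_rightS, mem_leftS]
  constructor
  · rintro ⟨t, ⟨c, hc, rfl⟩, hx⟩
    rw [mulT_node, mem_rightS] at hx
    obtain ⟨p, hp, q, hq, hx⟩ := hx
    rw [mem_leftS] at hq
    obtain ⟨s, hs, m, hm, hq⟩ := hq
    exact ⟨p, hp, q, ⟨s, hs, m, ⟨c, hc, hm⟩, hq⟩, hx⟩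
  · rintro ⟨p, hp, q, ⟨s, hs, m, ⟨c, hc, hm⟩, hq⟩, hx⟩
    refine ⟨node l c, ⟨c, hc, rfl⟩, ?_⟩
    rw [mulT_node, mem_rightS]
    exact ⟨p, hp, q, mem_leftS.mpr ⟨s, hs, m, hm, hq⟩, hx⟩

lemma mulS_imageR (r' : PBT) (X S : Set PBT) :
    mulS ((fun c => node c r') '' X) S = rightS (mulS X S) (leftS S (mulT r' S)) := by
  ext x
  simp only [mem_mulS, Set.mem_image, mem_rightS, mem_leftS]
  constructor
  · rintro ⟨t, ⟨c, hc, rfl⟩, hx⟩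
    rw [mulT_node, mem_rightS] at hx
    obtain ⟨p, hp, q, hq, hx⟩ := hx
    exact ⟨p, ⟨c, hc, hp⟩, q, mem_leftS.mp hq, hx⟩
  · rintro ⟨p, ⟨c, hc, hp⟩, q, hq, hx⟩
    refine ⟨node c r', ⟨c, hc, rfl⟩, ?_⟩
    rw [mulT_node, mem_rightS]
    exact ⟨p, hp, q, mem_leftS.mpr hq, hx⟩

theorem M (x y : PBT) (S : Set PBT) :
    mulS (addT x y) S = addS (mulT x S) (mulT y S) := by
  cases x with
  | leaf => rw [addT_leaf_left, mulS_single, mulT_leaf, addS_leaf_left]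
  | node l r =>
    cases y with
    | leaf => rw [addT_leaf_right, mulS_single, mulT_leaf, addS_leaf_right]
    | node l' r' =>
      have hL : mulS (leftT (node l r) (node l' r')) S
          = leftS (mulT (node l r) S) (mulT (node l' r') S) := by
        rw [leftT_node, mulS_imageL, M r (node l' r') S, mulT_node l r,
          leftS_rightS, leftS_leftS]
      have hR : mulS (rightT (node l r) (node l' r')) S
          = rightS (mulT (node l r) S) (mulT (node l' r') S) := by
        rw [rightT_node, mulS_imageR, M (node l r) l' S, ← rightS_rightS,
          ← mulT_node l' r']
      rw [addT_eq_union_left _ _ (by simp), mulS_union, hL, hR,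
        ← addS_split_noleaf _ _ (leaf_not_mem_mulT_node l r S)]
termination_by x.size + y.size
decreasing_by all_goals (simp [size] <;> omega)

lemma memM (a b : PBT) (t : Set PBT) (x : PBT) :
    (∃ u ∈ addT a b, x ∈ mulT u t) ↔
      ∃ p ∈ mulT a t, ∃ q ∈ mulT b t, x ∈ addT p q := by
  have := Set.ext_iff.mp (M a b t) x
  simpa [mem_mulS, mem_addS] using this

theorem left_distrib (r s t : Set PBT) :
    mulS (addS r s) t = addS (mulS r t) (mulS s t) := by
  ext x
  simp only [mem_mulS, mem_addS]
  constructor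
  · rintro ⟨u, ⟨a, ha, b, hb, hu⟩, hx⟩
    obtain ⟨p, hp, q, hq, hx'⟩ := (memM a b t x).mp ⟨u, hu, hx⟩
    exact ⟨p, ⟨a, ha, hp⟩, q, ⟨b, hb, hq⟩, hx'⟩
  · rintro ⟨p, ⟨a, ha, hp⟩, q, ⟨b, hb, hq⟩, hx⟩
    obtain ⟨u, hu, hx'⟩ := (memM a b t x).mpr ⟨p, hp, q, hq, hx⟩
    exact ⟨u, ⟨a, ha, b, hb, hu⟩, hx'⟩



def one : PBT := node leaf leaf
def ra : PBT := node leaf one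
def w : PBT := node ra one

lemma addT_one_one : addT one one = {node leaf one, node one leaf} := by
  show addT (node leaf leaf) (node leaf leaf) = _
  rw [addT]
  simp [addT, one]
  ext x
  simp
  tauto

lemma hA : w ∈ addS (mulS {ra} {one}) (mulS {ra} {one}) := by
  simp [w, ra, one, mulS, mulT, addS, addT, leftS, rightS, leftT, rightT]

lemma mem_rightT_leaf {x q : PBT} (h : x ∈ rightT leaf q) : x = q := by
  cases q with
  | leaf => simp at h
  | node q1 q2 =>
    rw [rightT_node] at h
    obtain ⟨z, hz, hx⟩ := h
    simp only [addT_leaf_left, Set.mem_singleton_iff] at hz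
    rw [hz] at hx
    exact hx.symm

lemma hB : w ∉ mulS {ra} (addS {one} {one}) := by
  rw [mulS_single, addS_single, addT_one_one]
  intro h
  rw [ra, mulT_node, mem_rightS] at h
  obtain ⟨p, hp, q, hq, hw⟩ := h
  simp only [mulT_leaf, Set.mem_singleton_iff] at hp
  rw [hp] at hw
  rw [← mem_rightT_leaf hw, mem_leftS] at hq
  obtain ⟨a, ha, b, hb, hwl⟩ := hq
  simp only [Set.mem_insert_iff, Set.mem_singleton_iff] at ha
  rcases ha with rfl | rfl <;>
  · rw [leftT_node] at hwl
    obtain ⟨z, hz, hx⟩ := hwl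
    rw [w, ra, one] at hx
    simp at hx

lemma good_single {t : PBT} (h : t ≠ leaf) : Good {t} := by
  refine ⟨⟨t, rfl⟩, Set.finite_singleton t, ?_⟩
  rintro u rfl
  exact h


end PBT

open PBT in
/-- Tree multiplication distributes over the left factor of a sum:
`(r + s) × t = (r × t) + (s × t)` for all nonempty finite sets of nontrivial
trees, while right distributivity `r × (s + t) = (r × s) + (r × t)` fails in
general. -/
theorem mulS_left_distrib_and_not_right_distrib :
    (∀ r s t : Set PBT, PBT.Good r → PBT.Good s → PBT.Good t →
      mulS (addS r s) t = addS (mulS r t) (mulS s t)) ∧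
    ¬ (∀ r s t : Set PBT, PBT.Good r → PBT.Good s → PBT.Good t →
      mulS r (addS s t) = addS (mulS r s) (mulS r t)) := by
  constructor
  · intro r s t _ _ _
    exact PBT.left_distrib r s t
  · intro H
    have h := H {PBT.ra} {PBT.one} {PBT.one}
      (PBT.good_single (by simp [PBT.ra])) (PBT.good_single (by simp [PBT.one]))
      (PBT.good_single (by simp [PBT.one]))
    exact PBT.hB (by rw [h]; exact PBT.hA)
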